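/- arXiv:0707.4226 — 12 statements merged into one kernel-verified Lean document; each statement's English description precedes it below -/
import Mathlib

section
/- Let G be a Lie algebra, ρ: G → gl(V) a representation, and q: G → V a bijective 1-cocycle associated to ρ (i.e. q[x,y] = ρ(x)q(y) − ρ(y)q(x) for all x, y ∈ G). Then the product x*y = q^{-1}(ρ(x)q(y)) defines a left-symmetric algebra structure on G that is compatible with the Lie algebra G, i.e. (x*y)*z − x*(y*z) = (y*x)*z − y*(x*z) for all x,y,z, and x*y − y*x = [x,y] for all x, y ∈ G. -/
open TensorProduct

attribute [local instance 100] LieRing.ofAssociativeRing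

theorem stmt3 {K : Type*} [Field K]
    {G : Type*} [LieRing G] [LieAlgebra K G]
    {V : Type*} [AddCommGroup V] [Module K V]
    (ρ : G →ₗ⁅K⁆ Module.End K V) (q : G ≃ₗ[K] V)
    (hq : ∀ x y : G, q ⁅x, y⁆ = ρ x (q y) - ρ y (q x))
    (mul : G → G → G) (hmul : ∀ x y : G, mul x y = q.symm (ρ x (q y))) :
    (∀ x y z : G,
        mul (mul x y) z - mul x (mul y z) = mul (mul y x) z - mul y (mul x z)) ∧
      ∀ x y : G, mul x y - mul y x = ⁅x, y⁆ := by
  have key : ∀ x y : G, q (mul x y) = ρ x (q y) := by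
    intro x y; rw [hmul]; simp
  have comm : ∀ x y : G, mul x y - mul y x = ⁅x, y⁆ := by
    intro x y
    apply q.injective
    rw [map_sub, key, key, hq]
  refine ⟨fun x y z => ?_, comm⟩
  apply q.injective
  simp only [map_sub, key]
  have h1 : ρ (mul x y) (q z) - ρ (mul y x) (q z) = ρ ⁅x, y⁆ (q z) := by
    rw [← comm]
    have := map_sub ρ.toLinearMap (mul x y) (mul y x)
    simp only [LieHom.coe_toLinearMap] at this
    rw [this]; rfl
  have h2 : ρ ⁅x, y⁆ (q z) = ρ x (ρ y (q z)) - ρ y (ρ x (q z)) := by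
    rw [LieHom.map_lie]; rfl
  rw [sub_eq_sub_iff_sub_eq_sub]
  exact h1.trans h2
end

section
/- Let G be a Lie algebra and ρ: G → gl(V) a representation with dim G = dim V finite. A linear isomorphism T: V → G is an O-operator associated to ρ (i.e. [T(u), T(v)] = T(ρ(T(u))v − ρ(T(v))u) for all u, v ∈ V) if and only if its inverse T^{-1}: G → V is a 1-cocycle of G associated to ρ (i.e. T^{-1}[x,y] = ρ(x)T^{-1}(y) − ρ(y)T^{-1}(x) for all x, y ∈ G). -/
open TensorProduct

attribute [local instance 100] LieRing.ofAssociativeRing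

theorem stmt4 {K : Type*} [Field K]
    {G : Type*} [LieRing G] [LieAlgebra K G] [FiniteDimensional K G]
    {V : Type*} [AddCommGroup V] [Module K V] [FiniteDimensional K V]
    (ρ : G →ₗ⁅K⁆ Module.End K V) (T : V ≃ₗ[K] G) :
    (∀ u v : V, ⁅T u, T v⁆ = T (ρ (T u) v - ρ (T v) u)) ↔
      ∀ x y : G, T.symm ⁅x, y⁆ = ρ x (T.symm y) - ρ y (T.symm x) := by
  constructor
  · intro h x y
    have := h (T.symm x) (T.symm y)
    simp only [T.apply_symm_apply] at this
    rw [this]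
    simp
  · intro h u v
    have := h (T u) (T v)
    simp only [T.symm_apply_apply] at this
    apply T.symm.injective
    simpa using this
end

section
/- Let G be a finite-dimensional Lie algebra over a field of characteristic 0, ρ: G → gl(V) a finite-dimensional representation, and q: G → V a bijective 1-cocycle of G associated to ρ. Then r = q^{-1} − (q^{-1})^{21}, where q^{-1}: V → G is identified with an element of G ⊗ V* ⊂ (G ⋉_{ρ*} V*) ⊗ (G ⋉_{ρ*} V*), is a skew-symmetric solution of the classical Yang–Baxter equation in the Lie algebra G ⋉_{ρ*} V*. -/
open TensorProduct

attribute [local instance 100] LieRing.ofAssociativeRing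

namespace CYBE

section SD

variable {K : Type*} [CommRing K] {G : Type*} [LieRing G] [LieAlgebra K G]
  {V : Type*} [AddCommGroup V] [Module K V]

/-- The semidirect product Lie algebra `G ⋉_ρ V` (as a type synonym of `G × V`). -/
def SD (ρ : G →ₗ⁅K⁆ Module.End K V) : Type _ := G × V

namespace SD

variable (ρ : G →ₗ⁅K⁆ Module.End K V)

instance : AddCommGroup (SD ρ) := inferInstanceAs (AddCommGroup (G × V))
instance : Module K (SD ρ) := inferInstanceAs (Module K (G × V))

variable {ρ}

/-- First component. -/
def fst (a : SD ρ) : G := (show G × V from a).1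
/-- Second component. -/
def snd (a : SD ρ) : V := (show G × V from a).2
/-- Build an element from components. -/
def mk' (x : G) (v : V) : SD ρ := show G × V from (x, v)

@[ext] lemma ext {a b : SD ρ} (h1 : a.fst = b.fst) (h2 : a.snd = b.snd) : a = b :=
  Prod.ext h1 h2

@[simp] lemma fst_mk' (x : G) (v : V) : (mk' x v : SD ρ).fst = x := rfl
@[simp] lemma snd_mk' (x : G) (v : V) : (mk' x v : SD ρ).snd = v := rfl
@[simp] lemma fst_add (a b : SD ρ) : (a + b).fst = a.fst + b.fst := rfl
@[simp] lemma snd_add (a b : SD ρ) : (a + b).snd = a.snd + b.snd := rfl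
@[simp] lemma fst_smul (t : K) (a : SD ρ) : (t • a).fst = t • a.fst := rfl
@[simp] lemma snd_smul (t : K) (a : SD ρ) : (t • a).snd = t • a.snd := rfl
@[simp] lemma fst_zero : (0 : SD ρ).fst = 0 := rfl
@[simp] lemma snd_zero : (0 : SD ρ).snd = 0 := rfl

variable (ρ)

instance : Bracket (SD ρ) (SD ρ) :=
  ⟨fun a b => mk' ⁅a.fst, b.fst⁆ (ρ a.fst b.snd - ρ b.fst a.snd)⟩

variable {ρ}

@[simp] lemma fst_bracket (a b : SD ρ) : ⁅a, b⁆.fst = ⁅a.fst, b.fst⁆ := rfl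
@[simp] lemma snd_bracket (a b : SD ρ) :
    ⁅a, b⁆.snd = ρ a.fst b.snd - ρ b.fst a.snd := rfl

variable (ρ)

instance : LieRing (SD ρ) :=
  { (inferInstance : AddCommGroup (SD ρ)), (inferInstance : Bracket (SD ρ) (SD ρ)) with
    add_lie := by
      intro a b c
      ext <;> simp [add_lie] <;> abel
    lie_add := by
      intro a b c
      ext <;> simp [lie_add] <;> abel
    lie_self := by
      intro a
      ext <;> simp only [fst_bracket, snd_bracket, lie_self, sub_self, fst_zero, snd_zero]
    leibniz_lie := by
      intro a b c
      ext
      · simp only [fst_bracket, fst_add]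
        exact leibniz_lie _ _ _
      · simp only [snd_bracket, fst_bracket, snd_add, fst_add, LieHom.map_lie, Ring.lie_def,
          LinearMap.sub_apply, Module.End.mul_apply, map_sub]
        abel }

instance : LieAlgebra K (SD ρ) :=
  { (inferInstance : Module K (SD ρ)) with
    lie_smul := by
      intro t x y
      ext <;> simp [smul_sub] }

/-- Inclusion of `G` into the semidirect product. -/
def inl : G →ₗ[K] SD ρ where
  toFun x := mk' x 0
  map_add' x y := by ext <;> simp
  map_smul' t x := by ext <;> simp

/-- Inclusion of `V` into the semidirect product. -/
def inr : V →ₗ[K] SD ρ where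
  toFun v := mk' 0 v
  map_add' x y := by ext <;> simp
  map_smul' t x := by ext <;> simp

end SD

/-- The dual representation `ρ*` of a representation `ρ`, defined by
`⟨ρ*(x)u*, v⟩ = −⟨u*, ρ(x)v⟩`. -/
def dualRep (ρ : G →ₗ⁅K⁆ Module.End K V) : G →ₗ⁅K⁆ Module.End K (Module.Dual K V) where
  toFun x := -(ρ x).dualMap
  map_add' x y := by
    refine LinearMap.ext fun φ => LinearMap.ext fun v => ?_
    simp [LinearMap.dualMap_apply]
    abel
  map_smul' t x := by
    refine LinearMap.ext fun φ => LinearMap.ext fun v => ?_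
    simp [LinearMap.dualMap_apply]
  map_lie' := by
    intro x y
    refine LinearMap.ext fun φ => LinearMap.ext fun v => ?_
    simp only [LieHom.map_lie, Ring.lie_def, LinearMap.sub_apply, Module.End.mul_apply,
      LinearMap.neg_apply, LinearMap.dualMap_apply, map_sub, map_neg]
    abel

end SD

section CYBE

variable (K : Type*) [Field K] (H : Type*) [LieRing H] [LieAlgebra K H]

/-- For `r ∈ H ⊗ H`, the element `[r₁₂,r₁₃] + [r₁₂,r₂₃] + [r₁₃,r₂₃]` of
`U(H) ⊗ U(H) ⊗ U(H)`. -/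
noncomputable def cybe (r : H ⊗[K] H) :
    (UniversalEnvelopingAlgebra K H ⊗[K] UniversalEnvelopingAlgebra K H) ⊗[K]
      UniversalEnvelopingAlgebra K H :=
  let U := UniversalEnvelopingAlgebra K H
  let i : H →ₗ[K] U := (UniversalEnvelopingAlgebra.ι K).toLinearMap
  let i12 : H ⊗[K] H →ₗ[K] (U ⊗[K] U) ⊗[K] U :=
    (TensorProduct.mk K (U ⊗[K] U) U).flip 1 ∘ₗ TensorProduct.map i i
  let i13 : H ⊗[K] H →ₗ[K] (U ⊗[K] U) ⊗[K] U :=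
    TensorProduct.map (((TensorProduct.mk K U U).flip 1) ∘ₗ i) i
  let i23 : H ⊗[K] H →ₗ[K] (U ⊗[K] U) ⊗[K] U :=
    TensorProduct.map ((TensorProduct.mk K U U 1) ∘ₗ i) i
  ⁅i12 r, i13 r⁆ + ⁅i12 r, i23 r⁆ + ⁅i13 r, i23 r⁆

/-- `r ∈ H ⊗ H` is a solution of the classical Yang–Baxter equation (in tensor form). -/
noncomputable def IsCYBESol (r : H ⊗[K] H) : Prop := cybe K H r = 0

end CYBE

section homToTensor

variable (K : Type*) [Field K] {G : Type*} [AddCommGroup G] [Module K G]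
  {V : Type*} [AddCommGroup V] [Module K V] [FiniteDimensional K V]

/-- The identification of a linear map `T : V → G` with the element
`Σᵢ T(vᵢ) ⊗ vᵢ*` of `G ⊗ V*`. -/
noncomputable def homToTensor (T : V →ₗ[K] G) : G ⊗[K] Module.Dual K V :=
  TensorProduct.comm K _ _ ((dualTensorHomEquiv K V G).symm T)

end homToTensor

end CYBE

namespace CYBEAux
open CYBE

/-! ### Basis expansion and swap lemmas for `homToTensor` -/

section swap
variable {K : Type*} [Field K] {G : Type*} [AddCommGroup G] [Module K G]
  {V : Type*} [AddCommGroup V] [Module K V] [FiniteDimensional K V]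
  {ι : Type*} [Fintype ι] (b : Module.Basis ι K V)

lemma dTHE_apply (x : Module.Dual K V ⊗[K] G) :
    dualTensorHomEquiv K V G x = dualTensorHom K V G x := by
  rw [dualTensorHomEquiv]; rfl

omit [FiniteDimensional K V] in
lemma sum_coord_smul (S : V →ₗ[K] G) (w : V) : ∑ i, b.coord i w • S (b i) = S w := by
  have : ∑ i, b.coord i w • S (b i) = S (∑ i, b.repr w i • b i) := by
    rw [map_sum]; simp [Module.Basis.coord_apply]
  rw [this, b.sum_repr]

lemma homToTensor_eq_sum (T : V →ₗ[K] G) :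
    homToTensor K T = ∑ i, T (b i) ⊗ₜ[K] b.coord i := by
  rw [homToTensor]
  have h : (dualTensorHomEquiv K V G).symm T = ∑ i, b.coord i ⊗ₜ[K] T (b i) := by
    rw [LinearEquiv.symm_apply_eq, dTHE_apply, map_sum]
    ext v
    simp only [LinearMap.coe_sum, Finset.sum_apply, dualTensorHom_apply]
    exact (sum_coord_smul b T v).symm
  rw [h, map_sum]
  simp [TensorProduct.comm_tmul]

lemma swap_sum (T : V →ₗ[K] G) (φ : Module.End K V) :
    (∑ i, T (φ (b i)) ⊗ₜ[K] b.coord i : G ⊗[K] Module.Dual K V) =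
      ∑ i, T (b i) ⊗ₜ[K] (b.coord i ∘ₗ φ) := by
  have h1 : (∑ i, T (φ (b i)) ⊗ₜ[K] b.coord i : G ⊗[K] Module.Dual K V) =
      homToTensor K (T ∘ₗ φ) := (homToTensor_eq_sum b (T ∘ₗ φ)).symm
  have hcc : ∀ z : Module.Dual K V ⊗[K] G,
      TensorProduct.comm K G (Module.Dual K V) (TensorProduct.comm K (Module.Dual K V) G z) = z := by
    intro z
    induction z using TensorProduct.induction_on with
    | zero => simp
    | tmul a c => simp [TensorProduct.comm_tmul]
    | add a c ha hc => simp [map_add, ha, hc]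
  apply ((TensorProduct.comm K G (Module.Dual K V)) ≪≫ₗ dualTensorHomEquiv K V G).injective
  rw [h1]
  simp only [LinearEquiv.trans_apply, homToTensor, hcc, LinearEquiv.apply_symm_apply]
  rw [map_sum]
  simp only [TensorProduct.comm_tmul, map_sum, dTHE_apply]
  ext v
  simp only [LinearMap.coe_sum, Finset.sum_apply, dualTensorHom_apply, LinearMap.comp_apply,
    LinearMap.coe_comp, Function.comp_apply]
  exact (sum_coord_smul b T (φ v)).symm

lemma swap_sum_bilin {W : Type*} [AddCommGroup W] [Module K W]
    (M : G →ₗ[K] Module.Dual K V →ₗ[K] W) (T : V →ₗ[K] G) (φ : Module.End K V) :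
    ∑ i, M (T (φ (b i))) (b.coord i) = ∑ i, M (T (b i)) (b.coord i ∘ₗ φ) := by
  have := congrArg (TensorProduct.lift M) (swap_sum b T φ)
  simpa only [map_sum, TensorProduct.lift.tmul] using this

end swap

/-! ### Bracket lemmas in the semidirect product -/

section sd
variable {K : Type*} [CommRing K] {G : Type*} [LieRing G] [LieAlgebra K G]
  {V : Type*} [AddCommGroup V] [Module K V] (ρ : G →ₗ⁅K⁆ Module.End K V)

lemma inl_apply (x : G) : SD.inl ρ x = SD.mk' x 0 := rfl
lemma inr_apply (v : V) : SD.inr ρ v = SD.mk' 0 v := rfl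

lemma lie_inl_inl (x y : G) : ⁅SD.inl ρ x, SD.inl ρ y⁆ = SD.inl ρ ⁅x, y⁆ := by
  ext <;> simp [inl_apply]

lemma lie_inl_inr (x : G) (v : V) : ⁅SD.inl ρ x, SD.inr ρ v⁆ = SD.inr ρ (ρ x v) := by
  ext <;> simp [inl_apply, inr_apply]

lemma lie_inr_inl (x : G) (v : V) : ⁅SD.inr ρ v, SD.inl ρ x⁆ = -SD.inr ρ (ρ x v) := by
  rw [← lie_skew, lie_inl_inr]

lemma lie_inr_inr (v w : V) : ⁅SD.inr ρ v, SD.inr ρ w⁆ = 0 := by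
  ext <;> simp [inr_apply]

end sd

lemma dualRep_apply {K : Type*} [CommRing K] {G : Type*} [LieRing G] [LieAlgebra K G]
    {V : Type*} [AddCommGroup V] [Module K V] (ρ : G →ₗ⁅K⁆ Module.End K V)
    (x : G) (φ : Module.Dual K V) :
    dualRep ρ x φ = -(φ ∘ₗ ρ x) := rfl

/-! ### Expansion of the CYBE expression -/

section cy
variable (K : Type*) [Field K] (H : Type*) [LieRing H] [LieAlgebra K H]

local notation "U" => UniversalEnvelopingAlgebra K H

noncomputable def iU : H →ₗ[K] U := (UniversalEnvelopingAlgebra.ι K).toLinearMap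

noncomputable def j12 : H ⊗[K] H →ₗ[K] (U ⊗[K] U) ⊗[K] U :=
  (TensorProduct.mk K (U ⊗[K] U) U).flip 1 ∘ₗ TensorProduct.map (iU K H) (iU K H)

noncomputable def j13 : H ⊗[K] H →ₗ[K] (U ⊗[K] U) ⊗[K] U :=
  TensorProduct.map (((TensorProduct.mk K U U).flip 1) ∘ₗ (iU K H)) (iU K H)

noncomputable def j23 : H ⊗[K] H →ₗ[K] (U ⊗[K] U) ⊗[K] U :=
  TensorProduct.map ((TensorProduct.mk K U U 1) ∘ₗ (iU K H)) (iU K H)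

noncomputable def nu : (H ⊗[K] H) ⊗[K] H →ₗ[K] (U ⊗[K] U) ⊗[K] U :=
  TensorProduct.map (TensorProduct.map (iU K H) (iU K H)) (iU K H)

lemma cybe_eq (r : H ⊗[K] H) :
    cybe K H r = ⁅j12 K H r, j13 K H r⁆ + ⁅j12 K H r, j23 K H r⁆ + ⁅j13 K H r, j23 K H r⁆ := rfl

variable {K H}

lemma j12_tmul (x y : H) : j12 K H (x ⊗ₜ[K] y) = (iU K H x ⊗ₜ[K] iU K H y) ⊗ₜ[K] 1 := by
  simp [j12, LinearMap.flip_apply, TensorProduct.mk_apply]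

lemma j13_tmul (x y : H) : j13 K H (x ⊗ₜ[K] y) = (iU K H x ⊗ₜ[K] 1) ⊗ₜ[K] iU K H y := by
  simp [j13, LinearMap.flip_apply, TensorProduct.mk_apply]

lemma j23_tmul (x y : H) : j23 K H (x ⊗ₜ[K] y) = ((1 : U) ⊗ₜ[K] iU K H x) ⊗ₜ[K] iU K H y := by
  simp [j23, TensorProduct.mk_apply]

lemma iU_lie (x y : H) : iU K H ⁅x, y⁆ = iU K H x * iU K H y - iU K H y * iU K H x := by
  show UniversalEnvelopingAlgebra.ι K ⁅x, y⁆ = _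
  rw [LieHom.map_lie, Ring.lie_def]
  rfl

lemma br1 (x y x' y' : H) :
    ⁅j12 K H (x ⊗ₜ[K] y), j13 K H (x' ⊗ₜ[K] y')⁆ = nu K H ((⁅x, x'⁆ ⊗ₜ[K] y) ⊗ₜ[K] y') := by
  rw [j12_tmul, j13_tmul, Ring.lie_def]
  simp only [Algebra.TensorProduct.tmul_mul_tmul, one_mul, mul_one, nu,
    TensorProduct.map_tmul, iU_lie]
  rw [TensorProduct.sub_tmul, TensorProduct.sub_tmul]

lemma br2 (x y x' y' : H) :
    ⁅j12 K H (x ⊗ₜ[K] y), j23 K H (x' ⊗ₜ[K] y')⁆ = nu K H ((x ⊗ₜ[K] ⁅y, x'⁆) ⊗ₜ[K] y') := by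
  rw [j12_tmul, j23_tmul, Ring.lie_def]
  simp only [Algebra.TensorProduct.tmul_mul_tmul, one_mul, mul_one, nu,
    TensorProduct.map_tmul, iU_lie]
  rw [TensorProduct.tmul_sub, TensorProduct.sub_tmul]

lemma br3 (x y x' y' : H) :
    ⁅j13 K H (x ⊗ₜ[K] y), j23 K H (x' ⊗ₜ[K] y')⁆ = nu K H ((x ⊗ₜ[K] x') ⊗ₜ[K] ⁅y, y'⁆) := by
  rw [j13_tmul, j23_tmul, Ring.lie_def]
  simp only [Algebra.TensorProduct.tmul_mul_tmul, one_mul, mul_one, nu,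
    TensorProduct.map_tmul, iU_lie]
  rw [TensorProduct.tmul_sub]

lemma rsum_lie {α : Type*} (s : Finset α)
    (f : α → (U ⊗[K] U) ⊗[K] U) (z : (U ⊗[K] U) ⊗[K] U) :
    ⁅∑ i ∈ s, f i, z⁆ = ∑ i ∈ s, ⁅f i, z⁆ := by
  classical
  induction s using Finset.cons_induction with
  | empty => rw [Finset.sum_empty, Finset.sum_empty]; exact zero_lie (L := (U ⊗[K] U) ⊗[K] U) z
  | cons a s ha ih => rw [Finset.sum_cons, Finset.sum_cons, ← ih]; exact add_lie (L := (U ⊗[K] U) ⊗[K] U) (f a) _ z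

lemma lie_rsum {α : Type*} (s : Finset α)
    (f : α → (U ⊗[K] U) ⊗[K] U) (z : (U ⊗[K] U) ⊗[K] U) :
    ⁅z, ∑ i ∈ s, f i⁆ = ∑ i ∈ s, ⁅z, f i⁆ := by
  classical
  induction s using Finset.cons_induction with
  | empty => rw [Finset.sum_empty, Finset.sum_empty]; exact lie_zero (L := (U ⊗[K] U) ⊗[K] U) z
  | cons a s ha ih => rw [Finset.sum_cons, Finset.sum_cons, ← ih]; exact lie_add (L := (U ⊗[K] U) ⊗[K] U) z (f a) _

lemma cybe_sum {ι' : Type*} [Fintype ι'] (x y : ι' → H) :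
    cybe K H (∑ s, x s ⊗ₜ[K] y s) =
      nu K H (∑ s, ∑ t, ((⁅x s, x t⁆ ⊗ₜ[K] y s) ⊗ₜ[K] y t +
        (x s ⊗ₜ[K] ⁅y s, x t⁆) ⊗ₜ[K] y t + (x s ⊗ₜ[K] x t) ⊗ₜ[K] ⁅y s, y t⁆)) := by
  rw [cybe_eq, map_sum, map_sum, map_sum]
  simp only [rsum_lie, lie_rsum, br1, br2, br3]
  simp only [map_sum, map_add, Finset.sum_add_distrib]
  congr 1
  · congr 1
    · exact Finset.sum_comm
    · exact Finset.sum_comm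
  · exact Finset.sum_comm

end cy

/-! ### Slot maps -/

section mslot
variable {K : Type*} [CommRing K] {P : Type*} [AddCommGroup P] [Module K P]

noncomputable def mSlot1 (h : P) : P →ₗ[K] P →ₗ[K] (P ⊗[K] P) ⊗[K] P :=
  (TensorProduct.mk K (P ⊗[K] P) P) ∘ₗ (TensorProduct.mk K P P h)

noncomputable def mSlot2 (h : P) : P →ₗ[K] P →ₗ[K] (P ⊗[K] P) ⊗[K] P :=
  (TensorProduct.mk K (P ⊗[K] P) P) ∘ₗ ((TensorProduct.mk K P P).flip h)

noncomputable def mSlot3 (h : P) : P →ₗ[K] P →ₗ[K] (P ⊗[K] P) ⊗[K] P :=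
  (TensorProduct.mk K P P).compr₂ ((TensorProduct.mk K (P ⊗[K] P) P).flip h)

@[simp] lemma mSlot1_apply (h x z : P) : mSlot1 (K := K) h x z = (h ⊗ₜ[K] x) ⊗ₜ[K] z := rfl
@[simp] lemma mSlot2_apply (h x z : P) : mSlot2 (K := K) h x z = (x ⊗ₜ[K] h) ⊗ₜ[K] z := rfl
@[simp] lemma mSlot3_apply (h x z : P) : mSlot3 (K := K) h x z = (x ⊗ₜ[K] z) ⊗ₜ[K] h := rfl

end mslot

lemma comm_comm_apply {K : Type*} [CommRing K] {M N : Type*} [AddCommGroup M] [Module K M]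
    [AddCommGroup N] [Module K N] (z : M ⊗[K] N) :
    TensorProduct.comm K N M (TensorProduct.comm K M N z) = z := by
  induction z using TensorProduct.induction_on with
  | zero => simp
  | tmul a c => simp [TensorProduct.comm_tmul]
  | add a c ha hc => simp [map_add, ha, hc]

/-! ### The main combinatorial computation -/

section main
variable {K : Type*} [Field K] {G : Type*} [LieRing G] [LieAlgebra K G]
  {V : Type*} [AddCommGroup V] [Module K V] [FiniteDimensional K V]

set_option maxHeartbeats 1600000 in
lemma main_calc (ρ : G →ₗ⁅K⁆ Module.End K V) (T : V →ₗ[K] G)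
    {ι : Type*} [Fintype ι] (b : Module.Basis ι K V)
    (hco : ∀ i j, ⁅T (b i), T (b j)⁆ = T (ρ (T (b i)) (b j)) - T (ρ (T (b j)) (b i)))
    (X Y : ι ⊕ ι → SD (dualRep ρ))
    (hX : X = Sum.elim (fun i => SD.inl (dualRep ρ) (T (b i)))
      (fun i => -SD.inr (dualRep ρ) (b.coord i)))
    (hY : Y = Sum.elim (fun i => SD.inr (dualRep ρ) (b.coord i))
      (fun i => SD.inl (dualRep ρ) (T (b i)))) :
    ∑ s : ι ⊕ ι, ∑ t : ι ⊕ ι,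
      ((⁅X s, X t⁆ ⊗ₜ[K] Y s) ⊗ₜ[K] Y t + (X s ⊗ₜ[K] ⁅Y s, X t⁆) ⊗ₜ[K] Y t +
        (X s ⊗ₜ[K] X t) ⊗ₜ[K] ⁅Y s, Y t⁆) = 0 := by
  subst hX hY
  set A : ι → SD (dualRep ρ) := fun i => SD.inl (dualRep ρ) (T (b i)) with hA
  set B : ι → SD (dualRep ρ) := fun i => SD.inr (dualRep ρ) (b.coord i) with hB
  set C : ι → ι → SD (dualRep ρ) :=
    fun i j => SD.inr (dualRep ρ) (b.coord i ∘ₗ ρ (T (b j))) with hC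
  set D : ι → ι → SD (dualRep ρ) :=
    fun i j => SD.inl (dualRep ρ) (T (ρ (T (b i)) (b j))) with hD
  have hA' : ∀ i, SD.inl (dualRep ρ) (T (b i)) = A i := fun _ => rfl
  have hB' : ∀ i, SD.inr (dualRep ρ) (b.coord i) = B i := fun _ => rfl
  simp only [Fintype.sum_sum_type, Sum.elim_inl, Sum.elim_inr, hA', hB']
  have bAA : ∀ i j, ⁅A i, A j⁆ = D i j - D j i := fun i j => by
    show ⁅SD.inl (dualRep ρ) (T (b i)), SD.inl (dualRep ρ) (T (b j))⁆ =
      SD.inl (dualRep ρ) (T (ρ (T (b i)) (b j))) - SD.inl (dualRep ρ) (T (ρ (T (b j)) (b i)))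
    rw [lie_inl_inl, hco i j, map_sub]
  have bBA : ∀ i j, ⁅B i, A j⁆ = C i j := fun i j => by
    show ⁅SD.inr (dualRep ρ) (b.coord i), SD.inl (dualRep ρ) (T (b j))⁆ =
      SD.inr (dualRep ρ) (b.coord i ∘ₗ ρ (T (b j)))
    rw [lie_inr_inl, dualRep_apply, map_neg, neg_neg]
  have bAB : ∀ i j, ⁅A i, B j⁆ = -C j i := fun i j => by
    show ⁅SD.inl (dualRep ρ) (T (b i)), SD.inr (dualRep ρ) (b.coord j)⁆ =
      -SD.inr (dualRep ρ) (b.coord j ∘ₗ ρ (T (b i)))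
    rw [lie_inl_inr, dualRep_apply, map_neg]
  have bBB : ∀ i j : ι, ⁅B i, B j⁆ = 0 := fun i j =>
    lie_inr_inr (dualRep ρ) (b.coord i) (b.coord j)
  -- pointwise normal forms for the four quadrants
  have bAnB : ∀ i j, ⁅A i, -B j⁆ = C j i := fun i j => by
    rw [lie_neg, bAB i j, neg_neg]
  have bBnB : ∀ i j, ⁅B i, -B j⁆ = 0 := fun i j => by rw [lie_neg, bBB i j, neg_zero]
  have bnBA : ∀ i j, ⁅-B i, A j⁆ = -C i j := fun i j => by rw [neg_lie, bBA i j]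
  have bnBnB : ∀ i j, ⁅-B i, -B j⁆ = 0 := fun i j => by rw [neg_lie, lie_neg, bBB i j, neg_zero, neg_zero]
  have h11 : ∀ i j : ι, (⁅A i, A j⁆ ⊗ₜ[K] B i) ⊗ₜ[K] B j + (A i ⊗ₜ[K] ⁅B i, A j⁆) ⊗ₜ[K] B j +
      (A i ⊗ₜ[K] A j) ⊗ₜ[K] ⁅B i, B j⁆ =
      ((D i j ⊗ₜ[K] B i) ⊗ₜ[K] B j - (D j i ⊗ₜ[K] B i) ⊗ₜ[K] B j) +
        (A i ⊗ₜ[K] C i j) ⊗ₜ[K] B j := by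
    intro i j
    simp only [bAnB, bBnB, bnBA, bnBnB, bAA, bBA, bAB, bBB, TensorProduct.sub_tmul,
      TensorProduct.tmul_sub, TensorProduct.neg_tmul, TensorProduct.tmul_neg,
      TensorProduct.tmul_zero, TensorProduct.zero_tmul, neg_neg, add_zero, zero_add]
    try abel
  have h12 : ∀ i j : ι, (⁅A i, -B j⁆ ⊗ₜ[K] B i) ⊗ₜ[K] A j + (A i ⊗ₜ[K] ⁅B i, -B j⁆) ⊗ₜ[K] A j +
      (A i ⊗ₜ[K] (-B j)) ⊗ₜ[K] ⁅B i, A j⁆ =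
      (C j i ⊗ₜ[K] B i) ⊗ₜ[K] A j - (A i ⊗ₜ[K] B j) ⊗ₜ[K] C i j := by
    intro i j
    simp only [bAnB, bBnB, bnBA, bnBnB, bAA, bBA, bAB, bBB, TensorProduct.sub_tmul,
      TensorProduct.tmul_sub, TensorProduct.neg_tmul, TensorProduct.tmul_neg,
      TensorProduct.tmul_zero, TensorProduct.zero_tmul, neg_neg, add_zero, zero_add]
    try abel
  have h21 : ∀ i j : ι, (⁅-B i, A j⁆ ⊗ₜ[K] A i) ⊗ₜ[K] B j + ((-B i) ⊗ₜ[K] ⁅A i, A j⁆) ⊗ₜ[K] B j +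
      ((-B i) ⊗ₜ[K] A j) ⊗ₜ[K] ⁅A i, B j⁆ =
      -((C i j ⊗ₜ[K] A i) ⊗ₜ[K] B j) -
        ((B i ⊗ₜ[K] D i j) ⊗ₜ[K] B j - (B i ⊗ₜ[K] D j i) ⊗ₜ[K] B j) +
        (B i ⊗ₜ[K] A j) ⊗ₜ[K] C j i := by
    intro i j
    simp only [bAnB, bBnB, bnBA, bnBnB, bAA, bBA, bAB, bBB, TensorProduct.sub_tmul,
      TensorProduct.tmul_sub, TensorProduct.neg_tmul, TensorProduct.tmul_neg,
      TensorProduct.tmul_zero, TensorProduct.zero_tmul, neg_neg, add_zero, zero_add]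
    try abel
  have h22 : ∀ i j : ι, (⁅-B i, -B j⁆ ⊗ₜ[K] A i) ⊗ₜ[K] A j +
      ((-B i) ⊗ₜ[K] ⁅A i, -B j⁆) ⊗ₜ[K] A j + ((-B i) ⊗ₜ[K] (-B j)) ⊗ₜ[K] ⁅A i, A j⁆ =
      -((B i ⊗ₜ[K] C j i) ⊗ₜ[K] A j) +
        ((B i ⊗ₜ[K] B j) ⊗ₜ[K] D i j - (B i ⊗ₜ[K] B j) ⊗ₜ[K] D j i) := by
    intro i j
    simp only [bAnB, bBnB, bnBA, bnBnB, bAA, bBA, bAB, bBB, TensorProduct.sub_tmul,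
      TensorProduct.tmul_sub, TensorProduct.neg_tmul, TensorProduct.tmul_neg,
      TensorProduct.tmul_zero, TensorProduct.zero_tmul, neg_neg, add_zero, zero_add]
    try abel
  simp only [h11, h12, h21, h22]
  -- the six swap identities
  have c1 : (∑ i : ι, ∑ j : ι, (D i j ⊗ₜ[K] B i) ⊗ₜ[K] B j) =
      ∑ i : ι, ∑ j : ι, (A i ⊗ₜ[K] B j) ⊗ₜ[K] C i j := by
    have inner : ∀ i : ι, (∑ j : ι, (D i j ⊗ₜ[K] B i) ⊗ₜ[K] B j) =
        ∑ j : ι, (A j ⊗ₜ[K] B i) ⊗ₜ[K] C j i := by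
      intro i
      have h := swap_sum_bilin b
        ((mSlot2 (B i) ∘ₗ SD.inl (dualRep ρ)).compl₂ (SD.inr (dualRep ρ))) T (ρ (T (b i)))
      simpa only [LinearMap.compl₂_apply, LinearMap.comp_apply, mSlot2_apply,
        hA, hB, hC, hD] using h
    calc (∑ i : ι, ∑ j : ι, (D i j ⊗ₜ[K] B i) ⊗ₜ[K] B j)
        = ∑ i : ι, ∑ j : ι, (A j ⊗ₜ[K] B i) ⊗ₜ[K] C j i :=
          Finset.sum_congr rfl fun i _ => inner i
      _ = ∑ i : ι, ∑ j : ι, (A i ⊗ₜ[K] B j) ⊗ₜ[K] C i j := Finset.sum_comm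
  have c2 : (∑ i : ι, ∑ j : ι, (D j i ⊗ₜ[K] B i) ⊗ₜ[K] B j) =
      ∑ i : ι, ∑ j : ι, (A i ⊗ₜ[K] C i j) ⊗ₜ[K] B j := by
    have inner : ∀ j : ι, (∑ i : ι, (D j i ⊗ₜ[K] B i) ⊗ₜ[K] B j) =
        ∑ i : ι, (A i ⊗ₜ[K] C i j) ⊗ₜ[K] B j := by
      intro j
      have h := swap_sum_bilin b
        ((mSlot3 (B j) ∘ₗ SD.inl (dualRep ρ)).compl₂ (SD.inr (dualRep ρ))) T (ρ (T (b j)))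
      simpa only [LinearMap.compl₂_apply, LinearMap.comp_apply, mSlot3_apply,
        hA, hB, hC, hD] using h
    calc (∑ i : ι, ∑ j : ι, (D j i ⊗ₜ[K] B i) ⊗ₜ[K] B j)
        = ∑ j : ι, ∑ i : ι, (D j i ⊗ₜ[K] B i) ⊗ₜ[K] B j := Finset.sum_comm
      _ = ∑ j : ι, ∑ i : ι, (A i ⊗ₜ[K] C i j) ⊗ₜ[K] B j :=
          Finset.sum_congr rfl fun j _ => inner j
      _ = ∑ i : ι, ∑ j : ι, (A i ⊗ₜ[K] C i j) ⊗ₜ[K] B j := Finset.sum_comm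
  have c3 : (∑ i : ι, ∑ j : ι, (B i ⊗ₜ[K] D i j) ⊗ₜ[K] B j) =
      ∑ i : ι, ∑ j : ι, (B i ⊗ₜ[K] A j) ⊗ₜ[K] C j i := by
    refine Finset.sum_congr rfl fun i _ => ?_
    have h := swap_sum_bilin b
      ((mSlot1 (B i) ∘ₗ SD.inl (dualRep ρ)).compl₂ (SD.inr (dualRep ρ))) T (ρ (T (b i)))
    simpa only [LinearMap.compl₂_apply, LinearMap.comp_apply, mSlot1_apply,
      hA, hB, hC, hD] using h
  have c4 : (∑ i : ι, ∑ j : ι, (B i ⊗ₜ[K] D j i) ⊗ₜ[K] B j) =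
      ∑ i : ι, ∑ j : ι, (C i j ⊗ₜ[K] A i) ⊗ₜ[K] B j := by
    have inner : ∀ j : ι, (∑ i : ι, (B i ⊗ₜ[K] D j i) ⊗ₜ[K] B j) =
        ∑ i : ι, (C i j ⊗ₜ[K] A i) ⊗ₜ[K] B j := by
      intro j
      have h := swap_sum_bilin b
        (((mSlot3 (B j)).flip ∘ₗ SD.inl (dualRep ρ)).compl₂ (SD.inr (dualRep ρ))) T
        (ρ (T (b j)))
      simpa only [LinearMap.compl₂_apply, LinearMap.comp_apply, LinearMap.flip_apply,
        mSlot3_apply, hA, hB, hC, hD] using h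
    calc (∑ i : ι, ∑ j : ι, (B i ⊗ₜ[K] D j i) ⊗ₜ[K] B j)
        = ∑ j : ι, ∑ i : ι, (B i ⊗ₜ[K] D j i) ⊗ₜ[K] B j := Finset.sum_comm
      _ = ∑ j : ι, ∑ i : ι, (C i j ⊗ₜ[K] A i) ⊗ₜ[K] B j :=
          Finset.sum_congr rfl fun j _ => inner j
      _ = ∑ i : ι, ∑ j : ι, (C i j ⊗ₜ[K] A i) ⊗ₜ[K] B j := Finset.sum_comm
  have c5 : (∑ i : ι, ∑ j : ι, (B i ⊗ₜ[K] B j) ⊗ₜ[K] D i j) =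
      ∑ i : ι, ∑ j : ι, (B i ⊗ₜ[K] C j i) ⊗ₜ[K] A j := by
    refine Finset.sum_congr rfl fun i _ => ?_
    have h := swap_sum_bilin b
      (((mSlot1 (B i)).flip ∘ₗ SD.inl (dualRep ρ)).compl₂ (SD.inr (dualRep ρ))) T
      (ρ (T (b i)))
    simpa only [LinearMap.compl₂_apply, LinearMap.comp_apply, LinearMap.flip_apply,
      mSlot1_apply, hA, hB, hC, hD] using h
  have c6 : (∑ i : ι, ∑ j : ι, (B i ⊗ₜ[K] B j) ⊗ₜ[K] D j i) =
      ∑ i : ι, ∑ j : ι, (C j i ⊗ₜ[K] B i) ⊗ₜ[K] A j := by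
    have inner : ∀ j : ι, (∑ i : ι, (B i ⊗ₜ[K] B j) ⊗ₜ[K] D j i) =
        ∑ i : ι, (C i j ⊗ₜ[K] B j) ⊗ₜ[K] A i := by
      intro j
      have h := swap_sum_bilin b
        (((mSlot2 (B j)).flip ∘ₗ SD.inl (dualRep ρ)).compl₂ (SD.inr (dualRep ρ))) T
        (ρ (T (b j)))
      simpa only [LinearMap.compl₂_apply, LinearMap.comp_apply, LinearMap.flip_apply,
        mSlot2_apply, hA, hB, hC, hD] using h
    calc (∑ i : ι, ∑ j : ι, (B i ⊗ₜ[K] B j) ⊗ₜ[K] D j i)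
        = ∑ j : ι, ∑ i : ι, (B i ⊗ₜ[K] B j) ⊗ₜ[K] D j i := Finset.sum_comm
      _ = ∑ j : ι, ∑ i : ι, (C i j ⊗ₜ[K] B j) ⊗ₜ[K] A i :=
          Finset.sum_congr rfl fun j _ => inner j
      _ = ∑ i : ι, ∑ j : ι, (C j i ⊗ₜ[K] B i) ⊗ₜ[K] A j := rfl
  simp only [Finset.sum_add_distrib, Finset.sum_sub_distrib, Finset.sum_neg_distrib]
  rw [c1, c2, c3, c4, c5, c6]
  abel

end main

end CYBEAux

open CYBEAux in
set_option maxHeartbeats 1600000 in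
open CYBE in
theorem stmt5 {K : Type*} [Field K] [CharZero K]
    {G : Type*} [LieRing G] [LieAlgebra K G] [FiniteDimensional K G]
    {V : Type*} [AddCommGroup V] [Module K V] [FiniteDimensional K V]
    (ρ : G →ₗ⁅K⁆ Module.End K V) (q : G ≃ₗ[K] V)
    (hq : ∀ x y : G, q ⁅x, y⁆ = ρ x (q y) - ρ y (q x))
    (r : SD (dualRep ρ) ⊗[K] SD (dualRep ρ))
    (hr : r =
      TensorProduct.map (SD.inl (dualRep ρ)) (SD.inr (dualRep ρ))
          (homToTensor K (q.symm : V →ₗ[K] G)) -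
        TensorProduct.comm K _ _
          (TensorProduct.map (SD.inl (dualRep ρ)) (SD.inr (dualRep ρ))
            (homToTensor K (q.symm : V →ₗ[K] G)))) :
    IsCYBESol K (SD (dualRep ρ)) r ∧
      TensorProduct.comm K (SD (dualRep ρ)) (SD (dualRep ρ)) r = -r := by
  classical
  set T : V →ₗ[K] G := (q.symm : V →ₗ[K] G) with hT
  set b := Module.finBasis K V with hbb
  have hco : ∀ i j, ⁅T (b i), T (b j)⁆ = T (ρ (T (b i)) (b j)) - T (ρ (T (b j)) (b i)) := by
    intro i j
    apply q.injective
    rw [hq]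
    simp only [hT, map_sub, LinearEquiv.coe_coe, LinearEquiv.apply_symm_apply]
  set X : Fin (Module.finrank K V) ⊕ Fin (Module.finrank K V) → SD (dualRep ρ) :=
    Sum.elim (fun i => SD.inl (dualRep ρ) (T (b i)))
      (fun i => -SD.inr (dualRep ρ) (b.coord i)) with hX
  set Y : Fin (Module.finrank K V) ⊕ Fin (Module.finrank K V) → SD (dualRep ρ) :=
    Sum.elim (fun i => SD.inr (dualRep ρ) (b.coord i))
      (fun i => SD.inl (dualRep ρ) (T (b i))) with hY
  have hr2 : r = ∑ s, X s ⊗ₜ[K] Y s := by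
    rw [hr, homToTensor_eq_sum b T, map_sum, map_sum]
    simp only [TensorProduct.map_tmul, TensorProduct.comm_tmul, hX, hY,
      Fintype.sum_sum_type, Sum.elim_inl, Sum.elim_inr, TensorProduct.neg_tmul]
    rw [Finset.sum_neg_distrib, ← sub_eq_add_neg]
  constructor
  · show cybe K (SD (dualRep ρ)) r = 0
    rw [hr2, cybe_sum X Y, main_calc ρ T b hco X Y hX hY, map_zero]
  · rw [hr, map_sub, comm_comm_apply, neg_sub]
end

section
/- Let G be a Lie algebra, ρ: G → gl(V) a representation, and T: V → G an invertible O-operator associated to ρ. Then x·y = T(ρ(x)(T^{-1}(y))) defines a compatible left-symmetric algebra structure on G (i.e. it is left-symmetric and x·y − y·x = [x,y] for all x, y ∈ G). Moreover, the product u*v = ρ(T(u))v defines a left-symmetric algebra structure on V, and T is an isomorphism of left-symmetric algebras from (V, *) to (G, ·), i.e. T(u*v) = T(u)·T(v) for all u, v ∈ V. -/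
open TensorProduct

attribute [local instance 100] LieRing.ofAssociativeRing

theorem stmt8 {K : Type*} [Field K]
    {G : Type*} [LieRing G] [LieAlgebra K G]
    {V : Type*} [AddCommGroup V] [Module K V]
    (ρ : G →ₗ⁅K⁆ Module.End K V) (T : V ≃ₗ[K] G)
    (hT : ∀ u v : V, ⁅T u, T v⁆ = T (ρ (T u) v - ρ (T v) u))
    (dot : G → G → G) (hdot : ∀ x y : G, dot x y = T (ρ x (T.symm y)))
    (star : V → V → V) (hstar : ∀ u v : V, star u v = ρ (T u) v) :
    (∀ x y z : G,
        dot (dot x y) z - dot x (dot y z) = dot (dot y x) z - dot y (dot x z)) ∧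
      (∀ x y : G, dot x y - dot y x = ⁅x, y⁆) ∧
      (∀ u v w : V,
        star (star u v) w - star u (star v w) = star (star v u) w - star v (star u w)) ∧
      ∀ u v : V, T (star u v) = dot (T u) (T v) := by
  -- key identity: difference of ρ's
  have hρ : ∀ u v : V, ρ (T (ρ (T u) v)) - ρ (T (ρ (T v) u))
      = ρ (T u) * ρ (T v) - ρ (T v) * ρ (T u) := by
    intro u v
    have h1 : T (ρ (T u) v) - T (ρ (T v) u) = ⁅T u, T v⁆ := by
      rw [hT, map_sub]
    calc ρ (T (ρ (T u) v)) - ρ (T (ρ (T v) u))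
        = ρ (T (ρ (T u) v) - T (ρ (T v) u)) := (map_sub ρ _ _).symm
      _ = ρ ⁅T u, T v⁆ := by rw [h1]
      _ = ⁅ρ (T u), ρ (T v)⁆ := by rw [LieHom.map_lie]
      _ = ρ (T u) * ρ (T v) - ρ (T v) * ρ (T u) := by rw [Ring.lie_def]
  have key : ∀ u v w : V,
      star (star u v) w - star u (star v w) = star (star v u) w - star v (star u w) := by
    intro u v w
    simp only [hstar]
    rw [sub_eq_sub_iff_sub_eq_sub]
    have := congrArg (fun f : Module.End K V => f w) (hρ u v)
    simpa [LinearMap.sub_apply, Module.End.mul_apply] using this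
  have hds : ∀ x y : G, dot x y = T (star (T.symm x) (T.symm y)) := by
    intro x y
    simp [hdot, hstar]
  refine ⟨?_, ?_, key, ?_⟩
  · intro x y z
    have h1 : T.symm (dot x y) = star (T.symm x) (T.symm y) := by
      rw [hds]; simp
    have h2 : T.symm (dot y x) = star (T.symm y) (T.symm x) := by
      rw [hds]; simp
    have h3 : T.symm (dot y z) = star (T.symm y) (T.symm z) := by
      rw [hds]; simp
    have h4 : T.symm (dot x z) = star (T.symm x) (T.symm z) := by
      rw [hds]; simp
    rw [hds (dot x y) z, hds x (dot y z), hds (dot y x) z, hds y (dot x z),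
      h1, h2, h3, h4, ← map_sub, ← map_sub, key]
  · intro x y
    have := hT (T.symm x) (T.symm y)
    simp only [LinearEquiv.apply_symm_apply] at this
    rw [hdot, hdot, ← map_sub, ← this]
  · intro u v
    simp [hdot, hstar]
end

section
/- Let G be a Lie algebra, ρ: G → gl(V) a representation, and T: V → G a linear map. Then the product u*v = ρ(T(u))v on V defines a left-symmetric algebra if and only if [T(u), T(v)] − T(ρ(T(u))v − ρ(T(v))u) ∈ Ker ρ for all u, v ∈ V, where Ker ρ = {x ∈ G : ρ(x) = 0}. -/
open TensorProduct

attribute [local instance 100] LieRing.ofAssociativeRing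

theorem stmt9 {K : Type*} [Field K]
    {G : Type*} [LieRing G] [LieAlgebra K G]
    {V : Type*} [AddCommGroup V] [Module K V]
    (ρ : G →ₗ⁅K⁆ Module.End K V) (T : V →ₗ[K] G)
    (star : V → V → V) (hstar : ∀ u v : V, star u v = ρ (T u) v) :
    (∀ u v w : V,
        star (star u v) w - star u (star v w) = star (star v u) w - star v (star u w)) ↔
      ∀ u v : V, ρ (⁅T u, T v⁆ - T (ρ (T u) v - ρ (T v) u)) = 0 := by
  have key : ∀ u v w : V,
      (ρ (⁅T u, T v⁆ - T (ρ (T u) v - ρ (T v) u))) w =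
        -((star (star u v) w - star u (star v w)) -
          (star (star v u) w - star v (star u w))) := by
    intro u v w
    simp only [hstar, map_sub, LieHom.map_lie, LinearMap.sub_apply, LieRing.of_associative_ring_bracket,
      Module.End.mul_apply]
    abel
  constructor
  · intro h u v
    ext w
    rw [key u v w, h u v]
    simp
  · intro h u v w
    have := congrArg (fun f : Module.End K V => f w) (h u v)
    simp only [key u v w, LinearMap.zero_apply] at this
    exact sub_eq_zero.mp (neg_eq_zero.mp this)
end

section
/- Let G be a Lie algebra, ρ: G → gl(V) a representation, and T: V → G an O-operator associated to ρ. Then u*v = ρ(T(u))v defines a left-symmetric algebra structure on V; in particular V is a Lie algebra under [u,v] = ρ(T(u))v − ρ(T(v))u (the sub-adjacent Lie algebra of this left-symmetric algebra), T is a homomorphism of Lie algebras from V to G, and the image T(V) is a Lie subalgebra of G. -/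
open TensorProduct

attribute [local instance 100] LieRing.ofAssociativeRing

theorem stmt10 {K : Type*} [Field K]
    {G : Type*} [LieRing G] [LieAlgebra K G]
    {V : Type*} [AddCommGroup V] [Module K V]
    (ρ : G →ₗ⁅K⁆ Module.End K V) (T : V →ₗ[K] G)
    (hT : ∀ u v : V, ⁅T u, T v⁆ = T (ρ (T u) v - ρ (T v) u))
    (star : V → V → V) (hstar : ∀ u v : V, star u v = ρ (T u) v)
    (β : V → V → V) (hβ : ∀ u v : V, β u v = ρ (T u) v - ρ (T v) u) :
    (∀ u v w : V,
        star (star u v) w - star u (star v w) = star (star v u) w - star v (star u w)) ∧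
      (∀ u v : V, β u v = star u v - star v u) ∧
      (∀ u v : V, β u v = -β v u) ∧
      (∀ u v w : V, β u (β v w) + β v (β w u) + β w (β u v) = 0) ∧
      (∀ u v : V, T (β u v) = ⁅T u, T v⁆) ∧
      ∀ x y : G, x ∈ Set.range T → y ∈ Set.range T → ⁅x, y⁆ ∈ Set.range T := by
  have key : ∀ u v : V, T (ρ (T u) v) - T (ρ (T v) u) = ⁅T u, T v⁆ := fun u v => by
    rw [← map_sub, ← hT]
  refine ⟨?_, ?_, ?_, ?_, ?_, ?_⟩
  · intro u v w
    simp only [hstar]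
    have h : ρ (T (ρ (T u) v) - T (ρ (T v) u)) w = ρ ⁅T u, T v⁆ w := by rw [key]
    simp only [map_sub, LinearMap.sub_apply, LieHom.map_lie, Ring.lie_def,
      Module.End.mul_apply] at h
    rw [sub_eq_sub_iff_sub_eq_sub]
    exact h
  · intro u v; rw [hβ, hstar, hstar]
  · intro u v; rw [hβ, hβ]; abel
  · intro u v w
    simp only [hβ]
    simp only [map_sub, ← hT]
    simp only [map_sub, LinearMap.sub_apply, LieHom.map_lie, Ring.lie_def,
      Module.End.mul_apply]
    abel
  · intro u v; rw [hβ, ← hT]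
  · rintro x y ⟨u, rfl⟩ ⟨v, rfl⟩
    exact ⟨ρ (T u) v - ρ (T v) u, (hT u v).symm⟩
end

section
/- Let A be a finite-dimensional left-symmetric algebra over a field of characteristic 0, with sub-adjacent Lie algebra G(A) and regular representation L. On the semidirect product Lie algebra H = G(A) ⋉_{L*} G(A)*, the bilinear form ω(x + x*, y + y*) = ⟨x*, y⟩ − ⟨y*, x⟩ (for x, y ∈ G(A), x*, y* ∈ G(A)*) is a symplectic form: it is skew-symmetric, nondegenerate, and satisfies the 2-cocycle condition ω([a,b], c) + ω([b,c], a) + ω([c,a], b) = 0 for all a, b, c ∈ H. -/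
open TensorProduct

attribute [local instance 100] LieRing.ofAssociativeRing

namespace CYBE

/-- The left-multiplication (regular) representation of a left-symmetric algebra,
as a representation of its sub-adjacent Lie algebra. -/
def regRep {K : Type*} [Field K] {G : Type*} [LieRing G] [LieAlgebra K G]
    (mul : G →ₗ[K] G →ₗ[K] G)
    (hls : ∀ x y z : G,
      mul (mul x y) z - mul x (mul y z) = mul (mul y x) z - mul y (mul x z))
    (hcompat : ∀ x y : G, mul x y - mul y x = ⁅x, y⁆) :
    G →ₗ⁅K⁆ Module.End K G :=
  { mul with
    map_lie' := by
      intro x y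
      refine LinearMap.ext fun z => ?_
      have key : mul ⁅x, y⁆ z = mul x (mul y z) - mul y (mul x z) := by
        rw [← hcompat x y, map_sub, LinearMap.sub_apply]
        exact sub_eq_sub_iff_sub_eq_sub.mp (hls x y z)
      simpa [Ring.lie_def] using key }

end CYBE

open CYBE in
theorem stmt11 {K : Type*} [Field K] [CharZero K]
    {G : Type*} [LieRing G] [LieAlgebra K G] [FiniteDimensional K G]
    (mul : G →ₗ[K] G →ₗ[K] G)
    (hls : ∀ x y z : G,
      mul (mul x y) z - mul x (mul y z) = mul (mul y x) z - mul y (mul x z))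
    (hcompat : ∀ x y : G, mul x y - mul y x = ⁅x, y⁆)
    (ω : SD (dualRep (regRep mul hls hcompat)) → SD (dualRep (regRep mul hls hcompat)) → K)
    (hω : ∀ a b : SD (dualRep (regRep mul hls hcompat)),
      ω a b = a.snd b.fst - b.snd a.fst) :
    (∀ a b, ω a b = -ω b a) ∧
      (∀ a, (∀ b, ω a b = 0) → a = 0) ∧
      ∀ a b c, ω ⁅a, b⁆ c + ω ⁅b, c⁆ a + ω ⁅c, a⁆ b = 0 := by
  have hdr : ∀ (x : G) (φ : Module.Dual K G) (v : G),
      (dualRep (regRep mul hls hcompat) x φ) v = -φ (mul x v) := fun _ _ _ => rfl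
  refine ⟨fun a b => by rw [hω, hω]; ring, fun a ha => ?_, fun a b c => ?_⟩
  · have h1 : a.fst = 0 := by
      rw [← Module.forall_dual_apply_eq_zero_iff K]
      intro φ
      have := ha (SD.mk' 0 φ)
      rw [hω] at this
      simpa using this.symm
    have h2 : a.snd = 0 := by
      ext v
      have := ha (SD.mk' v 0)
      rw [hω] at this
      simpa using this
    ext <;> simp [h1, h2]
  · simp only [hω, SD.snd_bracket, SD.fst_bracket, LinearMap.sub_apply, hdr,
      ← hcompat, map_sub, LinearMap.sub_apply]
    ring
end

section
/- Let G be a Lie algebra and f a linear transformation on G. The product x*y = [f(x), y] defines a left-symmetric algebra structure on the underlying vector space of G if and only if [f(x), f(y)] − f([f(x), y] + [x, f(y)]) lies in the center C(G) = {z ∈ G : [z, w] = 0 for all w ∈ G} for all x, y ∈ G. In particular, if f satisfies [f(x), f(y)] = f([f(x), y] + [x, f(y)]) for all x, y ∈ G, then x*y = [f(x), y] defines a left-symmetric algebra. -/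
open TensorProduct

theorem stmt12 {K : Type*} [Field K]
    {G : Type*} [LieRing G] [LieAlgebra K G]
    (f : G →ₗ[K] G) :
    ((∀ x y z : G,
        ⁅f ⁅f x, y⁆, z⁆ - ⁅f x, ⁅f y, z⁆⁆ = ⁅f ⁅f y, x⁆, z⁆ - ⁅f y, ⁅f x, z⁆⁆) ↔
      ∀ x y w : G, ⁅⁅f x, f y⁆ - f (⁅f x, y⁆ + ⁅x, f y⁆), w⁆ = 0) ∧
      ((∀ x y : G, ⁅f x, f y⁆ = f (⁅f x, y⁆ + ⁅x, f y⁆)) →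
        ∀ x y z : G,
          ⁅f ⁅f x, y⁆, z⁆ - ⁅f x, ⁅f y, z⁆⁆ = ⁅f ⁅f y, x⁆, z⁆ - ⁅f y, ⁅f x, z⁆⁆) := by
  have key : ∀ x y w : G, ⁅⁅f x, f y⁆ - f (⁅f x, y⁆ + ⁅x, f y⁆), w⁆ =
      (⁅f ⁅f y, x⁆, w⁆ - ⁅f y, ⁅f x, w⁆⁆) - (⁅f ⁅f x, y⁆, w⁆ - ⁅f x, ⁅f y, w⁆⁆) := by
    intro x y w
    have hx : ⁅x, f y⁆ = -⁅f y, x⁆ := (lie_skew x (f y)).symm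
    rw [hx, sub_lie, map_add, map_neg, add_lie, neg_lie, lie_lie]
    abel
  constructor
  · constructor
    · intro h x y w
      rw [key, h x y w, sub_self]
    · intro h x y z
      have := key x y z
      rw [h x y z] at this
      exact (sub_eq_zero.mp this.symm).symm
  · intro h x y z
    have := key x y z
    rw [h x y, sub_self, zero_lie] at this
    exact (sub_eq_zero.mp this.symm).symm
end

section
/- Let G be a Lie algebra and r a linear transformation on G satisfying the operator form of the classical Yang–Baxter equation: [r(x), r(y)] = r([r(x), y] + [x, r(y)]) for all x, y ∈ G. Then the product x·y = [x, r(y)] defines a right-symmetric algebra structure on G, i.e. (x·y)·z − x·(y·z) = (x·z)·y − x·(z·y) for all x, y, z ∈ G. -/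
open TensorProduct

theorem stmt14 {K : Type*} [Field K]
    {G : Type*} [LieRing G] [LieAlgebra K G]
    (r : G →ₗ[K] G)
    (hr : ∀ x y : G, ⁅r x, r y⁆ = r (⁅r x, y⁆ + ⁅x, r y⁆)) :
    ∀ x y z : G,
      ⁅⁅x, r y⁆, r z⁆ - ⁅x, r ⁅y, r z⁆⁆ = ⁅⁅x, r z⁆, r y⁆ - ⁅x, r ⁅z, r y⁆⁆ := by
  intro x y z
  have h1 : r ⁅y, r z⁆ - r ⁅z, r y⁆ = ⁅r y, r z⁆ := by
    rw [hr y z, ← map_sub]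
    congr 1
    rw [← lie_skew z (r y)]
    abel
  have h2 : ⁅⁅x, r y⁆, r z⁆ - ⁅⁅x, r z⁆, r y⁆ = ⁅x, ⁅r y, r z⁆⁆ := by
    rw [leibniz_lie x (r y) (r z), ← lie_skew (r y) ⁅x, r z⁆]
    abel
  have := sub_eq_sub_iff_sub_eq_sub.mpr (h2.trans (by rw [← h1, lie_sub]))
  linear_combination (norm := abel) this
end

section
/- Let G be a Lie algebra and f an invertible linear transformation on G satisfying the operator form of the classical Yang–Baxter equation: [f(x), f(y)] = f([f(x), y] + [x, f(y)]) for all x, y ∈ G. Then f satisfies [x, y] = [f(x), y] − [f(y), x] for all x, y ∈ G (i.e. the left-symmetric product x*y = [f(x), y] has sub-adjacent Lie bracket equal to that of G) if and only if f is an automorphism of the Lie algebra G. -/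
open TensorProduct

theorem stmt15 {K : Type*} [Field K]
    {G : Type*} [LieRing G] [LieAlgebra K G]
    (f : G ≃ₗ[K] G)
    (hf : ∀ x y : G, ⁅f x, f y⁆ = f (⁅f x, y⁆ + ⁅x, f y⁆)) :
    (∀ x y : G, ⁅x, y⁆ = ⁅f x, y⁆ - ⁅f y, x⁆) ↔ ∀ x y : G, f ⁅x, y⁆ = ⁅f x, f y⁆ := by
  constructor
  · intro h x y
    rw [hf x y]
    congr 1
    rw [h x y, ← lie_skew (f y) x]
    abel
  · intro h x y
    have := hf x y
    rw [← h x y] at this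
    have h2 := f.injective this
    rw [h2, ← lie_skew (f y) x]
    abel
end

section
/- Let G be a Lie algebra and f an invertible linear transformation on G satisfying the operator form of the classical Yang–Baxter equation: [f(x), f(y)] = f([f(x), y] + [x, f(y)]) for all x, y ∈ G. Then f^{-1} is a derivation of G, i.e. f^{-1}[x, y] = [f^{-1}(x), y] + [x, f^{-1}(y)] for all x, y ∈ G. -/
open TensorProduct

theorem stmt16 {K : Type*} [Field K]
    {G : Type*} [LieRing G] [LieAlgebra K G]
    (f : G ≃ₗ[K] G)
    (hf : ∀ x y : G, ⁅f x, f y⁆ = f (⁅f x, y⁆ + ⁅x, f y⁆)) :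
    ∀ x y : G, f.symm ⁅x, y⁆ = ⁅f.symm x, y⁆ + ⁅x, f.symm y⁆ := by
  intro x y
  have h := hf (f.symm x) (f.symm y)
  simp only [f.apply_symm_apply] at h
  rw [h, f.symm_apply_apply, add_comm]
end

section
/- Let G be a finite-dimensional complex Lie algebra equipped with a nondegenerate symmetric invariant bilinear form B. If there exists an invertible linear transformation R: G → G that is skew-symmetric with respect to B (i.e. B(R(x), y) = −B(x, R(y)) for all x, y) and satisfies the operator form of the classical Yang–Baxter equation [R(x), R(y)] = R([R(x), y] + [x, R(y)]) for all x, y ∈ G, then G is nilpotent. -/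
open TensorProduct

open Module LinearMap

attribute [local instance 100] LieRing.ofAssociativeRing

section Leibniz

variable {k : Type*} [Field k]
variable {M₁ M₂ M₃ : Type*} [AddCommGroup M₁] [Module k M₁]
  [AddCommGroup M₂] [Module k M₂] [AddCommGroup M₃] [Module k M₃]

/-- Core lemma: a "Leibniz triple" of operators kills products of "nilpotent vectors". -/
lemma leibniz_pow_vanish (m : M₁ →ₗ[k] M₂ →ₗ[k] M₃)
    (f₁ : Module.End k M₁) (f₂ : Module.End k M₂) (f₃ : Module.End k M₃)
    (h : ∀ a b, f₃ (m a b) = m (f₁ a) b + m a (f₂ b)) :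
    ∀ (n n₁ n₂ : ℕ), n₁ + n₂ = n → ∀ (a : M₁) (b : M₂),
      (f₁ ^ n₁) a = 0 → (f₂ ^ n₂) b = 0 → (f₃ ^ n) (m a b) = 0 := by
  intro n
  induction n with
  | zero =>
    intro n₁ n₂ hn a b ha hb
    have hn₁ : n₁ = 0 := by omega
    subst hn₁
    simp only [pow_zero, Module.End.one_apply] at ha
    simp [ha]
  | succ n ih =>
    intro n₁ n₂ hn a b ha hb
    match n₁, n₂ with
    | 0, _ =>
      simp only [pow_zero, Module.End.one_apply] at ha
      simp [ha]
    | _, 0 =>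
      simp only [pow_zero, Module.End.one_apply] at hb
      simp [hb]
    | n₁ + 1, n₂ + 1 =>
      have key : (f₃ ^ (n + 1)) (m a b) = (f₃ ^ n) (f₃ (m a b)) := by
        rw [pow_succ, Module.End.mul_apply]
      rw [key, h a b, map_add]
      have h1 : (f₃ ^ n) (m (f₁ a) b) = 0 := by
        apply ih n₁ (n₂ + 1) (by omega) (f₁ a) b
        · rw [← Module.End.mul_apply, ← pow_succ]; exact ha
        · exact hb
      have h2 : (f₃ ^ n) (m a (f₂ b)) = 0 := by
        apply ih (n₁ + 1) n₂ (by omega) a (f₂ b)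
        · exact ha
        · rw [← Module.End.mul_apply, ← pow_succ]; exact hb
      rw [h1, h2, add_zero]

/-- Generalized eigenspaces multiply under a Leibniz rule. -/
lemma maxGenEigenspace_map₂ (m : M₁ →ₗ[k] M₂ →ₗ[k] M₃)
    (f₁ : Module.End k M₁) (f₂ : Module.End k M₂) (f₃ : Module.End k M₃)
    (h : ∀ a b, f₃ (m a b) = m (f₁ a) b + m a (f₂ b)) (μ₁ μ₂ : k) {a : M₁} {b : M₂}
    (ha : a ∈ f₁.maxGenEigenspace μ₁) (hb : b ∈ f₂.maxGenEigenspace μ₂) :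
    m a b ∈ f₃.maxGenEigenspace (μ₁ + μ₂) := by
  rw [Module.End.mem_maxGenEigenspace] at ha hb ⊢
  obtain ⟨n₁, ha⟩ := ha
  obtain ⟨n₂, hb⟩ := hb
  refine ⟨n₁ + n₂, ?_⟩
  apply leibniz_pow_vanish m (f₁ - μ₁ • 1) (f₂ - μ₂ • 1) (f₃ - (μ₁ + μ₂) • 1) ?_ (n₁ + n₂) n₁ n₂
    rfl a b ha hb
  intro a b
  simp only [LinearMap.sub_apply, LinearMap.smul_apply, Module.End.one_apply, LinearMap.add_apply,
    map_sub, map_smul, h a b, add_smul]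
  abel

end Leibniz

open Module LinearMap

universe u v

section Engset

variable {k : Type u} [Field k]

/-- Brackets of spans land where brackets of generators land. -/
lemma span_lie_span_le {A : Type v} [LieRing A] [LieAlgebra k A]
    {p q : Set A} {r : Submodule k A} (h : ∀ a ∈ p, ∀ b ∈ q, ⁅a, b⁆ ∈ r) :
    ∀ a ∈ Submodule.span k p, ∀ b ∈ Submodule.span k q, ⁅a, b⁆ ∈ r := by
  intro a ha b hb
  induction ha using Submodule.span_induction with
  | mem a hmem =>
    induction hb using Submodule.span_induction with
    | mem b hmem' => exact h _ hmem _ hmem'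
    | zero => simp
    | add y z _ _ hy hz => rw [lie_add]; exact r.add_mem hy hz
    | smul c y _ hy => rw [lie_smul]; exact r.smul_mem c hy
  | zero => simp
  | add y z _ _ hy hz => rw [add_lie]; exact r.add_mem hy hz
  | smul c y _ hy => rw [smul_lie]; exact r.smul_mem c hy

theorem engset (n : ℕ) :
    ∀ (V : Type v) [AddCommGroup V] [Module k V] [FiniteDimensional k V],
    finrank k V ≤ n → ∀ (m : ℕ) (S : Set (Module.End k V)),
    (∀ a ∈ S, ∀ b ∈ S, ⁅a, b⁆ ∈ S) → (∀ a ∈ S, IsNilpotent a) →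
    finrank k ↥(Submodule.span k S) ≤ m →
    ∀ x ∈ Submodule.span k S, IsNilpotent x := by
  induction n with
  | zero =>
    intro V _ _ _ hV m S _ _ _ x _
    haveI : Subsingleton V := by
      rw [← Module.finrank_zero_iff (R := k)]; omega
    exact ⟨1, by ext v; simp [Subsingleton.elim (x v) 0]⟩
  | succ n ihn =>
    intro V _ _ _ hV m
    induction m with
    | zero =>
      intro S hLie hnil hspan x hx
      have : Submodule.span k S = ⊥ := Submodule.finrank_eq_zero.mp (by omega)
      rw [this, Submodule.mem_bot] at hx
      exact hx ▸ IsNilpotent.zero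
    | succ m ihm =>
      intro S hLie hnil hspan x hx
      classical
      by_cases hVtriv : Subsingleton V
      · exact ⟨1, by ext v; simp [Subsingleton.elim (x v) 0]⟩
      haveI : Nontrivial V := not_subsingleton_iff_nontrivial.mp hVtriv
      set L : Submodule k (Module.End k V) := Submodule.span k S with hL
      by_cases hLbot : L = ⊥
      · rw [hLbot, Submodule.mem_bot] at hx
        exact hx ▸ IsNilpotent.zero
      -- maximal Lie subset with proper span
      set P : ℕ → Prop := fun r => ∃ U : Set (Module.End k V),
        U ⊆ S ∧ (∀ a ∈ U, ∀ b ∈ U, ⁅a, b⁆ ∈ U) ∧ Submodule.span k U ≠ L ∧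
          finrank k ↥(Submodule.span k U) = r with hP
      have hP0 : P 0 := by
        refine ⟨∅, by simp, by simp, ?_, by simp⟩
        rw [Submodule.span_empty]; exact Ne.symm hLbot
      have hPbound : ∀ r, P r → r ≤ m := by
        rintro r ⟨U, hUS, -, hUne, rfl⟩
        have hle : Submodule.span k U < L := lt_of_le_of_ne (Submodule.span_mono hUS) hUne
        have := Submodule.finrank_lt_finrank_of_lt hle
        omega
      set r := Nat.findGreatest P m with hr
      have hPr : P r := Nat.findGreatest_spec (Nat.zero_le m) hP0
      obtain ⟨U, hUS, hULie, hUne, hUrank⟩ := hPr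
      set u : Submodule k (Module.End k V) := Submodule.span k U with hu
      have huL : u < L := lt_of_le_of_ne (Submodule.span_mono hUS) hUne
      -- elements of u are nilpotent (inner induction)
      have hunil : ∀ y ∈ u, IsNilpotent y := by
        apply ihm U hULie (fun a ha => hnil a (hUS ha))
        have := Submodule.finrank_lt_finrank_of_lt huL
        rw [← hu]
        omega
      -- u is closed under bracket
      have huclosed : ∀ a ∈ u, ∀ b ∈ u, ⁅a, b⁆ ∈ u :=
        span_lie_span_le fun a ha b hb => Submodule.subset_span (hULie a ha b hb)
      -- the Lie subalgebra on u
      set 𝕃 : LieSubalgebra k (Module.End k V) :=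
        { u with lie_mem' := fun {a b} ha hb => huclosed a ha b hb } with h𝕃
      have hmem𝕃 : ∀ y : Module.End k V, y ∈ 𝕃 ↔ y ∈ u := fun y => Iff.rfl
      -- every element of 𝕃 acts nilpotently on V
      have htoEndV : ∀ w : 𝕃, IsNilpotent (LieModule.toEnd k 𝕃 V w) := by
        intro w
        obtain ⟨j, hj⟩ := hunil w.1 w.2
        have heq : LieModule.toEnd k 𝕃 V w = w.1 := by
          ext v'
          simp [LieModule.toEnd_apply_apply, LieSubalgebra.coe_bracket_of_module]
        exact heq ▸ ⟨j, hj⟩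
      haveI hVnilmod : LieModule.IsNilpotent 𝕃 V :=
        (LieModule.isNilpotent_iff_forall' (R := k) (L := 𝕃) (M := V)).mpr htoEndV
      -- 𝕃 acts nilpotently on End V as well
      have htoEndE : ∀ w : 𝕃, IsNilpotent (LieModule.toEnd k 𝕃 (Module.End k V) w) := by
        intro w
        obtain ⟨j, hj⟩ := hunil w.1 w.2
        have heq : LieModule.toEnd k 𝕃 (Module.End k V) w
            = mulLeft k w.1 - mulRight k w.1 := by
          ext T
          simp [LieModule.toEnd_apply_apply, LieSubalgebra.coe_bracket_of_module,
            Ring.lie_def]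
        rw [heq]
        refine Commute.isNilpotent_sub (LinearMap.commute_mulLeft_right w.1 w.1) ?_ ?_
        · exact ⟨j, by rw [LinearMap.pow_mulLeft, hj, LinearMap.mulLeft_zero_eq_zero]⟩
        · exact ⟨j, by rw [LinearMap.pow_mulRight, hj, LinearMap.mulRight_zero_eq_zero]⟩
      haveI hEnilmod : LieModule.IsNilpotent 𝕃 (Module.End k V) :=
        (LieModule.isNilpotent_iff_forall' (R := k) (L := 𝕃)
          (M := Module.End k V)).mpr htoEndE
      obtain ⟨K, hK⟩ := LieModule.IsNilpotent.nilpotent k 𝕃 (Module.End k V)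
      -- there is an element of S outside u
      have hS_out : ∃ s₀ ∈ S, s₀ ∉ u := by
        by_contra hcon
        push_neg at hcon
        exact hUne (le_antisymm (Submodule.span_mono hUS) (Submodule.span_le.mpr hcon))
      -- find s' ∈ S \ u with ⁅U, s'⁆ ⊆ u
      have hs'ex : ∃ s' ∈ S, s' ∉ u ∧ ∀ w ∈ U, ⁅w, s'⁆ ∈ u := by
        by_contra hcon
        push_neg at hcon
        have hclimb : ∀ j : ℕ, ∃ s ∈ S, s ∉ u ∧
            s ∈ LieModule.lowerCentralSeries k 𝕃 (Module.End k V) j := by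
          intro j
          induction j with
          | zero =>
            obtain ⟨s₀, hs₀S, hs₀u⟩ := hS_out
            exact ⟨s₀, hs₀S, hs₀u, by simp⟩
          | succ j ihj =>
            obtain ⟨s, hsS, hsu, hsmem⟩ := ihj
            obtain ⟨w, hwU, hwbr⟩ := hcon s hsS hsu
            refine ⟨⁅w, s⁆, hLie w (hUS hwU) s hsS, hwbr, ?_⟩
            rw [LieModule.lowerCentralSeries_succ]
            have : ⁅w, s⁆ = ⁅((⟨w, Submodule.subset_span hwU⟩ : 𝕃) : Module.End k V), s⁆ := rfl
            rw [this]
            exact LieSubmodule.lie_mem_lie (LieSubmodule.mem_top _)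
              (by exact hsmem)
        obtain ⟨s, -, hs, hmem⟩ := hclimb K
        rw [hK] at hmem
        exact hs ((LieSubmodule.mem_bot _).mp hmem ▸ u.zero_mem)
      obtain ⟨s', hs'S, hs'u, hs'br⟩ := hs'ex
      -- u ⊔ span{s'} is everything
      have hUs'br : ∀ a ∈ u, ⁅a, s'⁆ ∈ u := by
        intro a ha
        have := span_lie_span_le (p := U) (q := {s'})
          (r := u) (fun w hw b hb => by rw [Set.mem_singleton_iff] at hb; exact hb ▸ hs'br w hw)
        exact this a ha s' (Submodule.mem_span_singleton_self s')
      set u' : Submodule k (Module.End k V) := Submodule.span k (U ∪ {s'}) with hu'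
      have hu'closed : ∀ a ∈ u', ∀ b ∈ u', ⁅a, b⁆ ∈ u := by
        apply span_lie_span_le
        rintro a ha b hb
        rcases ha with ha | ha <;> rcases hb with hb | hb
        · exact Submodule.subset_span (hULie a ha b hb)
        · rw [Set.mem_singleton_iff] at hb; exact hb ▸ hs'br a ha
        · rw [Set.mem_singleton_iff] at ha
          subst ha
          rw [← lie_skew]
          exact u.neg_mem (hs'br b hb)
        · rw [Set.mem_singleton_iff] at ha hb
          subst ha; subst hb; simp
      have hUs'S : (U ∪ {s'} : Set (Module.End k V)) ⊆ S := by
        rintro y (hy | hy)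
        · exact hUS hy
        · rw [Set.mem_singleton_iff] at hy; exact hy ▸ hs'S
      have hU' : u' = L := by
        by_contra hne
        set U' : Set (Module.End k V) := S ∩ u' with hU'def
        have hsubspan : Submodule.span k U' = u' := by
          apply le_antisymm
          · exact Submodule.span_le.mpr fun y hy => hy.2
          · exact Submodule.span_le.mpr fun y hy =>
              Submodule.subset_span ⟨hUs'S hy, Submodule.subset_span hy⟩
        have hP' : P (finrank k ↥u') := by
          refine ⟨U', fun y hy => hy.1, ?_, ?_, by rw [hsubspan]⟩
          · intro a ha b hb
            exact ⟨hLie a ha.1 b hb.1, le_trans (le_of_eq rfl)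
              (Submodule.span_mono (Set.subset_union_left)) (hu'closed a ha.2 b hb.2)⟩
          · rw [hsubspan]; exact hne
        have hlt : r < finrank k ↥u' := by
          have hlt' : u < u' := by
            refine lt_of_le_of_ne (by
              rw [hu, hu']
              exact Submodule.span_mono Set.subset_union_left) ?_
            intro heq
            exact hs'u (heq ▸ Submodule.subset_span (by simp))
          have := Submodule.finrank_lt_finrank_of_lt hlt'
          omega
        exact Nat.findGreatest_is_greatest hlt (hPbound _ hP') hP'
      -- decompose: every y ∈ L is y = a + c • s' with a ∈ u
      have hdecomp : ∀ y ∈ L, ∃ a ∈ u, ∃ c : k, y = a + c • s' := by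
        intro y hy
        rw [← hU', hu', Submodule.span_union] at hy
        obtain ⟨a, ha, b, hb, rfl⟩ := Submodule.mem_sup.mp hy
        obtain ⟨c, rfl⟩ := Submodule.mem_span_singleton.mp hb
        exact ⟨a, ha, c, rfl⟩
      -- common kernel vector
      haveI : Nontrivial ↥(LieModule.maxTrivSubmodule k 𝕃 V) :=
        LieModule.nontrivial_max_triv_of_isNilpotent k 𝕃 V
      obtain ⟨w₀, hw₀⟩ := exists_ne (0 : ↥(LieModule.maxTrivSubmodule k 𝕃 V))
      have hw₀mem : ∀ y ∈ u, y w₀.1 = 0 := by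
        intro y hy
        have := (LieModule.mem_maxTrivSubmodule k 𝕃 V w₀.1).mp w₀.2 ⟨y, hy⟩
        simpa [LieSubalgebra.coe_bracket_of_module] using this
      -- maxTriv is stable under s'
      have hstab : ∀ v : V, (∀ y ∈ u, y v = 0) → ∀ y ∈ u, y (s' v) = 0 := by
        intro v hv y hy
        have h1 : y (s' v) = ⁅y, s'⁆ v + s' (y v) := by
          simp [Ring.lie_def, LinearMap.sub_apply, Module.End.mul_apply]
        rw [h1, hv _ (hUs'br y hy), hv y hy, map_zero, add_zero]
      -- iterate s' on w₀ to get a vector killed by all of L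
      have hkillj : ∀ j : ℕ, ∀ y ∈ u, y ((s' ^ j) w₀.1) = 0 := by
        intro j
        induction j with
        | zero => simpa using hw₀mem
        | succ j ihj =>
          intro y hy
          have : (s' ^ (j + 1)) w₀.1 = s' ((s' ^ j) w₀.1) := by
            rw [pow_succ']; rfl
          rw [this]
          exact hstab _ ihj y hy
      obtain ⟨p₀, hp₀⟩ := hnil s' hs'S
      have hex : ∃ j : ℕ, (s' ^ j) w₀.1 = 0 := ⟨p₀, by rw [hp₀]; rfl⟩
      set j₀ := Nat.find hex with hj₀
      have hj₀spec : (s' ^ j₀) w₀.1 = 0 := Nat.find_spec hex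
      have hj₀pos : 0 < j₀ := by
        rcases Nat.eq_zero_or_pos j₀ with h | h
        · exfalso
          apply hw₀
          have := hj₀spec
          rw [h, pow_zero] at this
          exact Subtype.ext this
        · exact h
      set v : V := (s' ^ (j₀ - 1)) w₀.1 with hv
      have hvne : v ≠ 0 := Nat.find_min hex (by omega)
      have hs'v : s' v = 0 := by
        have h2 : s' v = (s' ^ (j₀ - 1 + 1)) w₀.1 := by
          rw [pow_succ', Module.End.mul_apply]
        have h3 : j₀ - 1 + 1 = j₀ := by omega
        rw [h2, h3, hj₀spec]
      have hvkill : ∀ y ∈ u, y v = 0 := hkillj (j₀ - 1)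
      -- every element of L kills v
      have hLkill : ∀ y ∈ L, y v = 0 := by
        intro y hy
        obtain ⟨a, ha, c, rfl⟩ := hdecomp y hy
        simp [LinearMap.add_apply, LinearMap.smul_apply, hvkill a ha, hs'v]
      -- pass to the quotient by the line spanned by v
      set pv : Submodule k V := Submodule.span k {v} with hpv
      have hpkill : ∀ y ∈ L, ∀ w ∈ pv, y w = 0 := by
        intro y hy w hw
        obtain ⟨c, rfl⟩ := Submodule.mem_span_singleton.mp hw
        simp [hLkill y hy]
      have hrankQ : finrank k (V ⧸ pv) ≤ n := by
        have h1 := Submodule.finrank_quotient_add_finrank pv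
        have h2 : finrank k ↥pv = 1 := finrank_span_singleton hvne
        omega
      have hcomap : ∀ y ∈ L, pv ≤ pv.comap y := by
        intro y hy w hw
        simp only [Submodule.mem_comap, hpkill y hy w hw]
        exact pv.zero_mem
      set Sb : Set (Module.End k (V ⧸ pv)) :=
        {T | ∃ s ∈ S, T ∘ₗ pv.mkQ = pv.mkQ ∘ₗ s} with hSb
      have hmulrel : ∀ (T₁ T₂ : Module.End k (V ⧸ pv)) (s₁ s₂ : Module.End k V),
          T₁ ∘ₗ pv.mkQ = pv.mkQ ∘ₗ s₁ → T₂ ∘ₗ pv.mkQ = pv.mkQ ∘ₗ s₂ →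
          (T₁ * T₂) ∘ₗ pv.mkQ = pv.mkQ ∘ₗ (s₁ * s₂) := by
        intro T₁ T₂ s₁ s₂ h₁ h₂
        calc (T₁ * T₂) ∘ₗ pv.mkQ = T₁ ∘ₗ (T₂ ∘ₗ pv.mkQ) := by
              rw [Module.End.mul_eq_comp, LinearMap.comp_assoc]
          _ = (T₁ ∘ₗ pv.mkQ) ∘ₗ s₂ := by rw [h₂, LinearMap.comp_assoc]
          _ = pv.mkQ ∘ₗ (s₁ * s₂) := by
              rw [h₁, Module.End.mul_eq_comp, LinearMap.comp_assoc]
      have hpowrel : ∀ (T : Module.End k (V ⧸ pv)) (s : Module.End k V),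
          T ∘ₗ pv.mkQ = pv.mkQ ∘ₗ s → ∀ q : ℕ, 1 ≤ q → (T ^ q) ∘ₗ pv.mkQ = pv.mkQ ∘ₗ (s ^ q) := by
        intro T s h q
        induction q with
        | zero => omega
        | succ q ihq =>
          intro _
          rcases Nat.eq_zero_or_pos q with h0 | h0
          · subst h0; simpa using h
          · rw [pow_succ, pow_succ]
            exact hmulrel _ _ _ _ (ihq h0) h
      have hSbLie : ∀ a ∈ Sb, ∀ b ∈ Sb, ⁅a, b⁆ ∈ Sb := by
        rintro a ⟨s₁, hs₁, h₁⟩ b ⟨s₂, hs₂, h₂⟩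
        refine ⟨⁅s₁, s₂⁆, hLie s₁ hs₁ s₂ hs₂, ?_⟩
        simp only [Ring.lie_def, LinearMap.sub_comp, LinearMap.comp_sub]
        rw [hmulrel _ _ _ _ h₁ h₂, hmulrel _ _ _ _ h₂ h₁]
      have hSbnil : ∀ a ∈ Sb, IsNilpotent a := by
        rintro a ⟨s, hs, hrel⟩
        obtain ⟨q, hq⟩ := hnil s hs
        refine ⟨q + 1, ?_⟩
        have h1 : (a ^ (q + 1)) ∘ₗ pv.mkQ = pv.mkQ ∘ₗ (s ^ (q + 1)) :=
          hpowrel a s hrel (q + 1) (by omega)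
        have h2 : s ^ (q + 1) = 0 := by rw [pow_succ, hq, zero_mul]
        rw [h2] at h1
        simp only [LinearMap.comp_zero] at h1
        exact (LinearMap.cancel_right (Submodule.mkQ_surjective pv)).mp (by simpa using h1)
      have hbar : ∀ y ∈ L, ∃ T ∈ Submodule.span k Sb, T ∘ₗ pv.mkQ = pv.mkQ ∘ₗ y := by
        intro y hy
        induction hy using Submodule.span_induction with
        | mem s hs =>
          refine ⟨pv.mapQ pv s (hcomap s (Submodule.subset_span hs)), ?_, ?_⟩
          · exact Submodule.subset_span ⟨s, hs, Submodule.mapQ_mkQ (p := pv) (q := pv) s⟩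
          · exact Submodule.mapQ_mkQ (p := pv) (q := pv) s
        | zero => exact ⟨0, Submodule.zero_mem _, by simp⟩
        | add y z _ _ hy' hz' =>
          obtain ⟨T₁, hT₁, h₁⟩ := hy'
          obtain ⟨T₂, hT₂, h₂⟩ := hz'
          exact ⟨T₁ + T₂, Submodule.add_mem _ hT₁ hT₂, by
            simp only [LinearMap.add_comp, LinearMap.comp_add, h₁, h₂]⟩
        | smul c y _ hy' =>
          obtain ⟨T, hT, h⟩ := hy'
          exact ⟨c • T, Submodule.smul_mem _ c hT, by
            simp only [LinearMap.smul_comp, LinearMap.comp_smul, h]⟩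
      obtain ⟨Tx, hTx, hTxrel⟩ := hbar x hx
      have hTxnil : IsNilpotent Tx :=
        ihn (V ⧸ pv) hrankQ (finrank k ↥(Submodule.span k Sb)) Sb hSbLie hSbnil le_rfl Tx hTx
      obtain ⟨K', hK'⟩ := hTxnil
      refine ⟨K' + 2, ?_⟩
      ext w
      have hker : (x ^ (K' + 1)) w ∈ pv := by
        have h1 : (Tx ^ (K' + 1)) ∘ₗ pv.mkQ = pv.mkQ ∘ₗ (x ^ (K' + 1)) :=
          hpowrel Tx x hTxrel (K' + 1) (by omega)
        have h2 : Tx ^ (K' + 1) = 0 := by rw [pow_succ, hK', zero_mul]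
        rw [h2] at h1
        have h3 : Submodule.Quotient.mk ((x ^ (K' + 1)) w) = (0 : V ⧸ pv) := by
          have := congrArg (fun f => f w) h1.symm
          simpa using this
        exact (Submodule.Quotient.mk_eq_zero pv).mp h3
      have h4 : (x ^ (K' + 2)) w = x ((x ^ (K' + 1)) w) := by
        rw [pow_succ', Module.End.mul_apply]
      rw [h4]
      simp only [LinearMap.zero_apply]
      exact hpkill x hx _ hker


end Engset
section Main

open LieAlgebra Module

theorem stmt17 {G : Type*} [LieRing G] [LieAlgebra ℂ G] [FiniteDimensional ℂ G]
    (B : G →ₗ[ℂ] G →ₗ[ℂ] ℂ)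
    (hB_nondeg : ∀ x : G, (∀ y : G, B x y = 0) → x = 0)
    (hB_symm : ∀ x y : G, B x y = B y x)
    (hB_inv : ∀ x y z : G, B ⁅x, y⁆ z = B x ⁅y, z⁆)
    (R : G ≃ₗ[ℂ] G)
    (hR_skew : ∀ x y : G, B (R x) y = -B x (R y))
    (hR : ∀ x y : G, ⁅R x, R y⁆ = R (⁅R x, y⁆ + ⁅x, R y⁆)) :
    LieRing.IsNilpotent G := by
  haveI : IsNoetherian ℂ G := IsNoetherian.iff_fg.mpr inferInstance
  -- D = R⁻¹ is an invertible derivation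
  set D : Module.End ℂ G := (R.symm : G →ₗ[ℂ] G) with hDdef
  have hDapp : ∀ a : G, D a = R.symm a := fun a => rfl
  have hDer : ∀ a b : G, D ⁅a, b⁆ = ⁅D a, b⁆ + ⁅a, D b⁆ := by
    intro a b
    have h := hR (R.symm a) (R.symm b)
    rw [R.apply_symm_apply, R.apply_symm_apply] at h
    have h2 := congrArg R.symm h
    rw [R.symm_apply_apply] at h2
    rw [hDapp, h2, hDapp, hDapp, add_comm]
  -- the induced derivation on End G
  set Δ : Module.End ℂ (Module.End ℂ G) :=
    LinearMap.mulLeft ℂ D - LinearMap.mulRight ℂ D with hΔdef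
  have hΔapp : ∀ T : Module.End ℂ G, Δ T = D * T - T * D := fun T => rfl
  have hΔder : ∀ T S : Module.End ℂ G, Δ (T * S) = (Δ T) * S + T * (Δ S) := by
    intro T S
    simp only [hΔapp]
    noncomm_ring
  have had1 : ∀ y : G, Δ (ad ℂ G y) = ad ℂ G (D y) := by
    intro y
    ext z
    simp only [hΔapp, LinearMap.sub_apply, Module.End.mul_apply, ad_apply]
    rw [hDer]
    abel
  -- grading of the bracket
  have hbr : ∀ (μ₁ μ₂ : ℂ) (a b : G), a ∈ D.maxGenEigenspace μ₁ → b ∈ D.maxGenEigenspace μ₂ →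
      ⁅a, b⁆ ∈ D.maxGenEigenspace (μ₁ + μ₂) := by
    intro μ₁ μ₂ a b ha hb
    have := maxGenEigenspace_map₂ (k := ℂ) (LieAlgebra.ad ℂ G).toLinearMap D D D
      (fun a b => by simp only [LieHom.coe_toLinearMap, ad_apply]; exact hDer a b) μ₁ μ₂ ha hb
    simpa using this
  -- grading of composition in End G
  have hmul : ∀ (μ₁ μ₂ : ℂ) (T S : Module.End ℂ G), T ∈ Δ.maxGenEigenspace μ₁ →
      S ∈ Δ.maxGenEigenspace μ₂ → T * S ∈ Δ.maxGenEigenspace (μ₁ + μ₂) := by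
    intro μ₁ μ₂ T S hT hS
    have := maxGenEigenspace_map₂ (k := ℂ) (LinearMap.mul ℂ (Module.End ℂ G)) Δ Δ Δ
      (fun a b => by simpa using hΔder a b) μ₁ μ₂ hT hS
    simpa using this
  -- ad maps weight spaces of D to weight spaces of Δ
  have hadpow : ∀ (μ : ℂ) (n : ℕ) (y : G),
      ((Δ - μ • 1) ^ n) (ad ℂ G y) = ad ℂ G (((D - μ • 1) ^ n) y) := by
    intro μ n
    induction n with
    | zero => intro y; simp
    | succ n ihn =>
      intro y
      rw [pow_succ', pow_succ', Module.End.mul_apply, Module.End.mul_apply, ihn]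
      have : (D - μ • 1) (((D - μ • 1) ^ n) y) = D (((D - μ • 1) ^ n) y)
          - μ • (((D - μ • 1) ^ n) y) := by
        simp [LinearMap.sub_apply]
      rw [this]
      have h5 : ad ℂ G (D (((D - μ • 1) ^ n) y) - μ • ((D - μ • 1) ^ n) y)
          = ad ℂ G (D (((D - μ • 1) ^ n) y)) - μ • ad ℂ G (((D - μ • 1) ^ n) y) := by
        rw [map_sub, map_smul]
      rw [h5, ← had1]
      simp [LinearMap.sub_apply]
  have hadgr : ∀ (μ : ℂ) (y : G), y ∈ D.maxGenEigenspace μ →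
      ad ℂ G y ∈ Δ.maxGenEigenspace μ := by
    intro μ y hy
    rw [Module.End.mem_maxGenEigenspace] at hy ⊢
    obtain ⟨n, hn⟩ := hy
    exact ⟨n, by rw [hadpow, hn, map_zero]⟩
  -- zero weight space of D is trivial
  have hG0 : D.maxGenEigenspace 0 = ⊥ := by
    rw [eq_bot_iff]
    intro y hy
    rw [Module.End.mem_maxGenEigenspace] at hy
    obtain ⟨n, hn⟩ := hy
    simp only [zero_smul, sub_zero] at hn
    rw [Submodule.mem_bot]
    have hinj : Function.Injective ⇑(D ^ n) := by
      rw [Module.End.coe_pow]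
      exact Function.Injective.iterate (R.symm.injective) n
    apply hinj
    rw [hn, map_zero]
  -- elements of nonzero weight spaces of Δ are nilpotent
  have hwt_nil : ∀ (μ : ℂ) (T : Module.End ℂ G), μ ≠ 0 → T ∈ Δ.maxGenEigenspace μ →
      IsNilpotent T := by
    intro μ T hμ hT
    have hTpow : ∀ j : ℕ, T ^ (j + 1) ∈ Δ.maxGenEigenspace ((j + 1 : ℕ) * μ) := by
      intro j
      induction j with
      | zero => simpa using hT
      | succ j ihj =>
        have := hmul _ _ _ _ ihj hT
        rw [pow_succ] at *
        convert this using 2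
        push_cast
        ring
        exact pow_succ T j
    have hfin : Set.Finite {ν : ℂ | Δ.maxGenEigenspace ν ≠ ⊥} :=
      WellFoundedGT.finite_ne_bot_of_iSupIndep (Module.End.independent_maxGenEigenspace Δ)
    have hexbot : ∃ j : ℕ, Δ.maxGenEigenspace ((j + 1 : ℕ) * μ) = ⊥ := by
      by_contra hcon
      push_neg at hcon
      have hinj : Function.Injective (fun j : ℕ => ((j + 1 : ℕ) : ℂ) * μ) := by
        intro a b hab
        simp only [mul_eq_mul_right_iff, hμ, or_false, Nat.cast_inj] at hab
        omega
      exact (Set.infinite_of_injective_forall_mem hinj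
        (fun j => hcon j)) hfin
    obtain ⟨j, hj⟩ := hexbot
    refine ⟨j + 1, ?_⟩
    have := hTpow j
    rw [hj, Submodule.mem_bot] at this
    exact this
  -- the Lie set of all weight vectors' adjoints
  set S : Set (Module.End ℂ G) :=
    {T | ∃ (μ : ℂ) (y : G), y ∈ D.maxGenEigenspace μ ∧ T = ad ℂ G y} with hSdef
  have hSLie : ∀ a ∈ S, ∀ b ∈ S, ⁅a, b⁆ ∈ S := by
    rintro a ⟨μ₁, y₁, hy₁, rfl⟩ b ⟨μ₂, y₂, hy₂, rfl⟩
    exact ⟨μ₁ + μ₂, ⁅y₁, y₂⁆, hbr μ₁ μ₂ y₁ y₂ hy₁ hy₂, (LieHom.map_lie _ _ _).symm⟩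
  have hSnil : ∀ a ∈ S, IsNilpotent a := by
    rintro a ⟨μ, y, hy, rfl⟩
    by_cases hμ : μ = 0
    · subst hμ
      rw [hG0, Submodule.mem_bot] at hy
      subst hy
      rw [map_zero]
      exact IsNilpotent.zero
    · exact hwt_nil μ _ hμ (hadgr μ y hy)
  have hspanS : ∀ x : G, ad ℂ G x ∈ Submodule.span ℂ S := by
    intro x
    have hx : x ∈ ⨆ μ : ℂ, D.maxGenEigenspace μ := by
      rw [Module.End.iSup_maxGenEigenspace_eq_top]
      trivial
    refine Submodule.iSup_induction (motive := fun y => ad ℂ G y ∈ Submodule.span ℂ S)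
      (fun μ : ℂ => D.maxGenEigenspace μ) hx ?_ ?_ ?_
    · intro μ y hy
      exact Submodule.subset_span ⟨μ, y, hy, rfl⟩
    · show ad ℂ G 0 ∈ Submodule.span ℂ S
      rw [map_zero]; exact Submodule.zero_mem _
    · intro y z hy hz
      show ad ℂ G (y + z) ∈ Submodule.span ℂ S
      rw [map_add]
      exact Submodule.add_mem _ hy hz
  have hadnil : ∀ x : G, IsNilpotent (ad ℂ G x) := by
    intro x
    exact engset (k := ℂ) (finrank ℂ G) G le_rfl
      (finrank ℂ ↥(Submodule.span ℂ S)) S hSLie hSnil le_rfl _ (hspanS x)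
  exact (LieAlgebra.isNilpotent_iff_forall (R := ℂ)).mpr hadnil

end Main
end
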